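/- arXiv:1711.00778 — 2 statements merged into one kernel-verified Lean document; each statement's English description precedes it below -/
import Mathlib

section
/- Let q : ℝ → ℝ be continuously differentiable with q and q' bounded, and suppose q' is uniformly continuous. Let V : ℝ → ℝ be continuous with only isolated zeros (its zero set has no accumulation points in ℝ), let r : ℝ → ℝ be continuous and bounded with r(t) → 0 as t → +∞, and suppose V((q - r)(t)) · q'(t) → 0 as t → +∞. Then q'(t) → 0 as t → +∞. -/
/-!
If `q'` does not tend to `0`, then `|q'(t₀)| ≥ M` for arbitrarily large `t₀`, and by uniform
continuity `|q'| > M / 2` on `[t₀, t₀ + δ]` for a fixed `δ`. On that window `q` moves by at least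
`Mδ / 2` while `r` is almost constant, so by the intermediate value theorem `q - r` sweeps out an
interval of length `Mδ / 4` inside a fixed compact set. A zero set without accumulation points has
empty interior, so every such interval contains a point where `|V| ≥ η`, with `η > 0` uniform by
compactness. Hence `|V(q - r) q'| ≥ ηM / 2` somewhere in every window, contradicting
`V(q - r) q' → 0`.
-/

open Filter Topology Set

theorem interior_eq_empty_of_forall_not_accPt {X : Type*} [TopologicalSpace X]
    [∀ x : X, (𝓝[≠] x).NeBot] {C : Set X} (hC : ∀ x, ¬AccPt x (𝓟 C)) : interior C = ∅ :=
  eq_empty_of_forall_notMem fun x hx => hC x <| accPt_iff_frequently_nhdsNE.2 <|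
    (eventually_nhdsWithin_of_eventually_nhds (mem_interior_iff_mem_nhds.1 hx)).frequently

theorem exists_pos_forall_exists_le_abs_of_interior_eq_empty {V : ℝ → ℝ}
    (hV : interior {y | V y = 0} = ∅) {L : ℝ} (hL : 0 < L) {K : Set ℝ} (hK : IsCompact K) :
    ∃ η > 0, ∀ a ∈ K, ∃ y ∈ Icc a (a + L), η ≤ |V y| := by
  have hloc : ∀ a ∈ K, ∀ᶠ p : ℝ × ℝ in 𝓝 (0, a), ∃ y ∈ Icc p.2 (p.2 + L), p.1 ≤ |V y| := by
    intro a _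
    obtain ⟨y, hy, hVy⟩ : ∃ y ∈ Ioo a (a + L), V y ≠ 0 := by
      by_contra! h
      have := (isOpen_Ioo.subset_interior_iff.2 h).trans_eq hV
      exact (nonempty_Ioo.2 (lt_add_of_pos_right a hL)).ne_empty (subset_empty_iff.1 this)
    -- one point where `V ≠ 0` serves every window starting in `Ioo (y - L) y` and every small `η`
    have hwin : ∀ᶠ b in 𝓝 a, b ∈ Ioo (y - L) y := Ioo_mem_nhds (by linarith [hy.2]) hy.1
    filter_upwards [(eventually_le_nhds (abs_pos.2 hVy)).prodMk_nhds hwin] with p hp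
    exact ⟨y, ⟨hp.2.2.le, by linarith [hp.2.1]⟩, hp.1⟩
  obtain ⟨η, hη, h⟩ := (hK.eventually_forall_of_forall_eventually
    (P := fun η a => ∃ y ∈ Icc a (a + L), η ≤ |V y|) hloc).exists_gt
  exact ⟨η, hη, h⟩

theorem UniformContinuous.exists_pos_half_lt_abs_on_Icc {f : ℝ → ℝ} (hf : UniformContinuous f)
    {M : ℝ} (hM : 0 < M) : ∃ δ > 0, ∀ t, M ≤ |f t| → ∀ s ∈ Icc t (t + δ), M / 2 < |f s| := by
  obtain ⟨δ, hδ, hclose⟩ := Metric.uniformContinuous_iff.1 hf (M / 2) (half_pos hM)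
  refine ⟨δ / 2, half_pos hδ, fun t ht s hs => ?_⟩
  have := hclose (a := s) (b := t) (by rw [Real.dist_eq, abs_of_nonneg] <;> linarith [hs.1, hs.2])
  rw [Real.dist_eq] at this
  linarith [abs_sub_abs_le_abs_sub (f t) (f s), abs_sub_comm (f s) (f t)]

theorem mul_sub_le_abs_sub_of_le_abs_deriv {f : ℝ → ℝ} (hf : Differentiable ℝ f) {a b m : ℝ}
    (hab : a < b) (hm : ∀ x ∈ Ioo a b, m ≤ |deriv f x|) : m * (b - a) ≤ |f b - f a| := by
  obtain ⟨c, hc, hslope⟩ :=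
    exists_deriv_eq_slope f hab hf.continuous.continuousOn hf.differentiableOn
  have := hm c hc
  rwa [hslope, abs_div, abs_of_pos (sub_pos.2 hab), le_div_iff₀ (sub_pos.2 hab)] at this

theorem mul_sub_sub_le_abs_sub_sub_of_le_abs_deriv {f e : ℝ → ℝ} (hf : Differentiable ℝ f)
    {a b m ε : ℝ} (hab : a < b) (hm : ∀ x ∈ Ioo a b, m ≤ |deriv f x|) (hea : |e a| ≤ ε)
    (heb : |e b| ≤ ε) : m * (b - a) - 2 * ε ≤ |(f b - e b) - (f a - e a)| := by
  rw [show (f b - e b) - (f a - e a) = (f b - f a) - (e b - e a) by ring]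
  linarith [mul_sub_le_abs_sub_of_le_abs_deriv hf hab hm, abs_sub (e b) (e a),
    abs_sub_abs_le_abs_sub (f b - f a) (e b - e a)]

theorem Icc_min_add_subset_image {g : ℝ → ℝ} {a b L : ℝ} (hg : ContinuousOn g (Icc a b))
    (hab : a ≤ b) (hL : L ≤ |g b - g a|) :
    Icc (min (g a) (g b)) (min (g a) (g b) + L) ⊆ g '' Icc a b := by
  rw [← uIcc_of_le hab] at hg ⊢
  refine (Icc_subset_Icc_right ?_).trans (intermediate_value_uIcc hg)
  linarith [max_sub_min_eq_abs (g a) (g b), abs_sub_comm (g a) (g b)]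

theorem deriv_tendsto_zero_of_isolated_zeros_general
    (q r V : ℝ → ℝ)
    (hq : ContDiff ℝ 1 q) (hqb : ∃ C, ∀ t, |q t| ≤ C)
    (hq'uc : UniformContinuous (deriv q))
    (hViso : ∀ x : ℝ, ¬ AccPt x (Filter.principal {y : ℝ | V y = 0}))
    (hr : Continuous r) (hrb : ∃ C, ∀ t, |r t| ≤ C)
    (hr0 : Tendsto r atTop (𝓝 0))
    (hprod : Tendsto (fun t => V (q t - r t) * deriv q t) atTop (𝓝 0)) :
    Tendsto (deriv q) atTop (𝓝 0) := by
  obtain ⟨Cq, hCq⟩ := hqb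
  obtain ⟨Cr, hCr⟩ := hrb
  have hqd : Differentiable ℝ q := hq.differentiable one_ne_zero
  set g := fun t => q t - r t
  have hgK : ∀ t, g t ∈ Icc (-(Cq + Cr)) (Cq + Cr) := fun t => by
    simp only [g, mem_Icc]; constructor <;> linarith [abs_le.1 (hCq t), abs_le.1 (hCr t)]
  rw [Metric.tendsto_atTop]
  intro M hM
  by_contra! hfreq
  obtain ⟨δ, hδ, hwin⟩ := hq'uc.exists_pos_half_lt_abs_on_Icc hM
  obtain ⟨η, hη, hVη⟩ := exists_pos_forall_exists_le_abs_of_interior_eq_empty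
    (interior_eq_empty_of_forall_not_accPt hViso) (L := M * δ / 4) (by positivity)
    (isCompact_Icc (a := -(Cq + Cr)) (b := Cq + Cr))
  obtain ⟨N, hN⟩ := eventually_atTop.1 <|
    (Metric.tendsto_nhds.1 hprod _ (by positivity : 0 < η * (M / 2))).and
      (Metric.tendsto_nhds.1 hr0 _ (by positivity : 0 < M * δ / 8))
  simp only [Real.dist_eq, sub_zero] at hN hfreq
  obtain ⟨t₀, ht₀N, hMt₀⟩ := hfreq N
  have hmove : M * δ / 4 ≤ |g (t₀ + δ) - g t₀| := by
    have := mul_sub_sub_le_abs_sub_sub_of_le_abs_deriv hqd (lt_add_of_pos_right t₀ hδ)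
      (fun s hs => (hwin t₀ hMt₀ s (Ioo_subset_Icc_self hs)).le)
      (hN t₀ ht₀N).2.le (hN (t₀ + δ) (by linarith)).2.le
    rw [add_sub_cancel_left] at this
    linarith
  obtain ⟨y, hy, hVy⟩ := hVη _ (min_rec' (· ∈ _) (hgK t₀) (hgK (t₀ + δ)))
  obtain ⟨s, hs, rfl⟩ := Icc_min_add_subset_image (g := g) (hqd.continuous.sub hr).continuousOn
    (by linarith) hmove hy
  refine lt_irrefl (η * (M / 2)) ?_
  calc η * (M / 2) ≤ |V (g s)| * |deriv q s| :=
        mul_le_mul hVy (hwin t₀ hMt₀ s hs).le (by positivity) (abs_nonneg _)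
    _ = |V (g s) * deriv q s| := (abs_mul _ _).symm
    _ < η * (M / 2) := (hN s (ht₀N.trans hs.1)).1

/-- Step 3 of the proof of Theorem 2.5: if `V` is continuous with only isolated zeros,
`q` is `C¹` with `q, q'` bounded and `q'` uniformly continuous, `r → 0`, and
`V(q - r)·q' → 0` at `+∞`, then `q'(t) → 0` at `+∞`. -/
theorem deriv_tendsto_zero_of_isolated_zeros
    (q r V : ℝ → ℝ)
    (hq : ContDiff ℝ 1 q) (hqb : ∃ C, ∀ t, |q t| ≤ C)
    (hq'b : ∃ C, ∀ t, |deriv q t| ≤ C)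
    (hq'uc : UniformContinuous (deriv q))
    (hV : Continuous V)
    (hViso : ∀ x : ℝ, ¬ AccPt x (Filter.principal {y : ℝ | V y = 0}))
    (hr : Continuous r) (hrb : ∃ C, ∀ t, |r t| ≤ C)
    (hr0 : Tendsto r atTop (𝓝 0))
    (hprod : Tendsto (fun t => V (q t - r t) * deriv q t) atTop (𝓝 0)) :
    Tendsto (deriv q) atTop (𝓝 0) :=
  deriv_tendsto_zero_of_isolated_zeros_general q r V hq hqb hq'uc hViso hr hrb hr0 hprod
end

section
/- Let q : ℝ → ℝ be bounded and Lipschitz, w ∈ L¹(ℝ), and define for t ≥ 0, q^t := q·𝟙_{[0,t]} and A(t) := (w * q^t)(t) = ∫ w(τ) q^t(t-τ) dτ. Then A : [0,∞) → ℝ is bounded and uniformly continuous, with ‖A‖_∞ ≤ ‖w‖_{L¹} ‖q‖_∞. -/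
/-!
For `s ≤ t` the integrands of `A t` and `A s` both vanish off `[0, t]`, differ by at most
`K (t - s) |w τ|` on `[0, s]` (Lipschitz bound), and by at most `C |w τ|` on `(s, t]`. Hence
`|A t - A s| ≤ K ‖w‖₁ |t - s| + C ∫_{(s, t]} |w|`, and the last integral tends to `0` uniformly
as `t - s → 0` by absolute continuity of the Lebesgue integral.
-/

open MeasureTheory Filter Topology Set Interval Uniformity

noncomputable def truncatedConvolution (w q : ℝ → ℝ) (t : ℝ) : ℝ :=
  ∫ τ, w τ * (Icc 0 t).indicator q (t - τ)

section

variable {w q : ℝ → ℝ} {C : ℝ}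

lemma indicator_Icc_zero_apply_sub (q : ℝ → ℝ) (t τ : ℝ) :
    (Icc 0 t).indicator q (t - τ) = (Icc 0 t).indicator (fun τ => q (t - τ)) τ := by
  have hmem : t - τ ∈ Icc 0 t ↔ τ ∈ Icc 0 t := by
    simp only [mem_Icc, sub_nonneg, sub_le_self_iff, and_comm]
  simp only [indicator_apply, hmem]

lemma abs_indicator_Icc_sub_sub_le {K : NNReal} (hqL : LipschitzWith K q)
    (hqb : ∀ s, |q s| ≤ C) (s t τ : ℝ) :
    |(Icc 0 t).indicator q (t - τ) - (Icc 0 s).indicator q (s - τ)|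
      ≤ K * dist s t + (Ι s t).indicator (fun _ => C) τ := by
  wlog hst : s ≤ t generalizing s t
  · rw [abs_sub_comm, dist_comm, uIoc_comm]
    exact this t s (le_of_not_ge hst)
  have hC : 0 ≤ C := (abs_nonneg _).trans (hqb 0)
  have hK : 0 ≤ K * dist s t := mul_nonneg K.coe_nonneg dist_nonneg
  have hind : 0 ≤ (Ι s t).indicator (fun _ => C) τ := indicator_nonneg (fun _ _ => hC) _
  rw [indicator_Icc_zero_apply_sub, indicator_Icc_zero_apply_sub]
  by_cases hτs : τ ∈ Icc 0 s
  · have hτt : τ ∈ Icc 0 t := ⟨hτs.1, hτs.2.trans hst⟩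
    rw [indicator_of_mem hτt, indicator_of_mem hτs]
    have hLip := hqL.dist_le_mul (t - τ) (s - τ)
    rw [Real.dist_eq, dist_sub_right, dist_comm] at hLip
    exact hLip.trans (le_add_of_nonneg_right hind)
  by_cases hτt : τ ∈ Icc 0 t
  · have hτ : τ ∈ Ι s t := by
      rw [uIoc_of_le hst]
      exact ⟨lt_of_not_ge fun h => hτs ⟨hτt.1, h⟩, hτt.2⟩
    rw [indicator_of_mem hτt, indicator_of_notMem hτs, indicator_of_mem hτ, sub_zero]
    exact (hqb _).trans (le_add_of_nonneg_left hK)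
  · rw [indicator_of_notMem hτt, indicator_of_notMem hτs, sub_zero, abs_zero]
    exact add_nonneg hK hind

lemma integrable_mul_indicator_Icc_sub (hw : Integrable w) (hq : Continuous q)
    (hqb : ∀ s, |q s| ≤ C) (t : ℝ) :
    Integrable (fun τ => w τ * (Icc 0 t).indicator q (t - τ)) :=
  hw.mul_bdd ((hq.measurable.indicator measurableSet_Icc).comp
      (measurable_const.sub measurable_id)).aestronglyMeasurable
    (ae_of_all _ fun _ => (norm_indicator_le_norm_self _ _).trans (hqb _))

lemma abs_truncatedConvolution_le (hw : Integrable w) (hqb : ∀ s, |q s| ≤ C) (t : ℝ) :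
    |truncatedConvolution w q t| ≤ (∫ τ, |w τ|) * C := by
  rw [← integral_mul_const, ← Real.norm_eq_abs]
  refine norm_integral_le_of_norm_le (hw.abs.mul_const C) (ae_of_all _ fun τ => ?_)
  rw [norm_mul, Real.norm_eq_abs]
  gcongr
  exact (norm_indicator_le_norm_self _ _).trans (hqb _)

lemma dist_truncatedConvolution_le (hw : Integrable w) {K : NNReal} (hqL : LipschitzWith K q)
    (hqb : ∀ s, |q s| ≤ C) (s t : ℝ) :
    dist (truncatedConvolution w q s) (truncatedConvolution w q t)
      ≤ K * (∫ τ, |w τ|) * dist s t + C * ∫ τ in Ι s t, |w τ| := by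
  have hint := integrable_mul_indicator_Icc_sub hw hqL.continuous hqb
  have hbound : Integrable fun τ =>
      |w τ| * (K * dist s t) + (Ι s t).indicator (fun τ => |w τ| * C) τ :=
    (hw.abs.mul_const _).add ((hw.abs.mul_const C).indicator measurableSet_uIoc)
  rw [dist_comm, Real.dist_eq, truncatedConvolution, truncatedConvolution,
    ← integral_sub (hint t) (hint s), ← Real.norm_eq_abs]
  calc ‖∫ τ, (w τ * (Icc 0 t).indicator q (t - τ) - w τ * (Icc 0 s).indicator q (s - τ))‖
      ≤ ∫ τ, (|w τ| * (K * dist s t) + (Ι s t).indicator (fun τ => |w τ| * C) τ) := by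
        refine norm_integral_le_of_norm_le hbound (ae_of_all _ fun τ => ?_)
        rw [← mul_sub, norm_mul, Real.norm_eq_abs, indicator_mul_right, ← mul_add]
        gcongr
        exact abs_indicator_Icc_sub_sub_le hqL hqb s t τ
    _ = K * (∫ τ, |w τ|) * dist s t + C * ∫ τ in Ι s t, |w τ| := by
        rw [integral_add (hw.abs.mul_const _) ((hw.abs.mul_const C).indicator measurableSet_uIoc),
          integral_indicator measurableSet_uIoc, integral_mul_const, integral_mul_const]
        ring

lemma Integrable.tendsto_setIntegral_uIoc_uniformity (hw : Integrable w) :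
    Tendsto (fun p : ℝ × ℝ => ∫ τ in Ι p.1 p.2, w τ) (𝓤 ℝ) (𝓝 0) := by
  refine hw.tendsto_setIntegral_nhds_zero ?_
  have hdist := tendsto_uniformity_iff_dist_tendsto_zero.1 (tendsto_id (x := 𝓤 ℝ))
  simpa [Function.comp_def, Real.volume_uIoc, Real.dist_eq, abs_sub_comm] using
    ENNReal.tendsto_ofReal hdist

lemma uniformContinuous_truncatedConvolution (hw : Integrable w) {K : NNReal}
    (hqL : LipschitzWith K q) (hqb : ∀ s, |q s| ≤ C) :
    UniformContinuous (truncatedConvolution w q) := by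
  refine tendsto_uniformity_iff_dist_tendsto_zero.2 (squeeze_zero (fun _ => dist_nonneg)
    (fun p => dist_truncatedConvolution_le hw hqL hqb p.1 p.2) ?_)
  have hdist := tendsto_uniformity_iff_dist_tendsto_zero.1 (tendsto_id (x := 𝓤 ℝ))
  simpa using (hdist.const_mul _).add
    ((Integrable.tendsto_setIntegral_uIoc_uniformity hw.abs).const_mul C)

end

/-- For `q` bounded and Lipschitz and `w ∈ L¹`, the function
`A(t) = (w * q^t)(t)` with `q^t = q·𝟙_{[0,t]}` is bounded by `‖w‖_{L¹}‖q‖_∞` and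
uniformly continuous on `[0, ∞)`. -/
theorem truncated_convolution_Cb
    (q : ℝ → ℝ) (K : NNReal) (hqL : LipschitzWith K q)
    (C : ℝ) (hqb : ∀ s, |q s| ≤ C)
    (w : ℝ → ℝ) (hw : Integrable w) :
    (∀ t : ℝ, 0 ≤ t →
        |∫ τ : ℝ, w τ * Set.indicator (Set.Icc 0 t) q (t - τ)|
          ≤ (∫ τ : ℝ, |w τ|) * C) ∧
      UniformContinuousOn
        (fun t : ℝ => ∫ τ : ℝ, w τ * Set.indicator (Set.Icc 0 t) q (t - τ))
        (Set.Ici 0) :=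
  ⟨fun t _ => abs_truncatedConvolution_le hw hqb t,
    (uniformContinuous_truncatedConvolution hw hqL hqb).uniformContinuousOn⟩
end
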